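/- arXiv:1802.00834 — 7 statements merged into one kernel-verified Lean document; each statement's English description precedes it below -/
import Mathlib

section
/- Let λ₁, μ₁, λ₂, μ₂ ∈ ℝ satisfy the Gutiérrez conditions 0 < −λ₂−μ₂ = μ₁ < μ₂ and λ₁+μ₁ > 0, and set K_j M := λ_j tr(M) I₂ + μ_j (M + Mᵀ) + 2μ₁ cof(M) for j = 1, 2. Then the kernel of K₂ is exactly the set of scalar multiples of the identity, {γ I₂ : γ ∈ ℝ}, and the kernel of K₁ is exactly the set of symmetric trace-free matrices {!![α,β; β,−α] : α, β ∈ ℝ} = span{G, H}. -/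
open Matrix

/-- Cofactor matrix of `A = !![a,c; b,d]`, namely `!![d,−b; −c,a]`. -/
def cof (A : Matrix (Fin 2) (Fin 2) ℝ) : Matrix (Fin 2) (Fin 2) ℝ :=
  !![A 1 1, -(A 1 0); -(A 0 1), A 0 0]

/-- The augmented elasticity map `K(λ,μ)M := λ tr(M) I₂ + μ (M + Mᵀ) + 2μ₁ cof(M)`. -/
noncomputable def Kmap (l m m1 : ℝ) (M : Matrix (Fin 2) (Fin 2) ℝ) :
    Matrix (Fin 2) (Fin 2) ℝ :=
  (l * M.trace) • (1 : Matrix (Fin 2) (Fin 2) ℝ) + m • (M + Mᵀ) + (2 * m1) • cof M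

lemma Kmap_eq (l m m1 : ℝ) (M : Matrix (Fin 2) (Fin 2) ℝ) :
    Kmap l m m1 M =
      !![l*(M 0 0+M 1 1)+2*m*M 0 0+2*m1*M 1 1, m*(M 0 1+M 1 0)-2*m1*M 1 0;
         m*(M 1 0+M 0 1)-2*m1*M 0 1, l*(M 0 0+M 1 1)+2*m*M 1 1+2*m1*M 0 0] := by
  ext i j
  fin_cases i <;> fin_cases j <;>
    simp [Kmap, cof, Matrix.trace_fin_two, Matrix.one_apply, Matrix.transpose_apply] <;> ring

theorem stmt4 (l1 m1 l2 m2 : ℝ)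
    (hpos : 0 < m1) (heq : -l2 - m2 = m1) (hlt : m1 < m2) (hvse : 0 < l1 + m1) :
    { M : Matrix (Fin 2) (Fin 2) ℝ | Kmap l2 m2 m1 M = 0 }
      = { M : Matrix (Fin 2) (Fin 2) ℝ |
          ∃ γ : ℝ, M = γ • (1 : Matrix (Fin 2) (Fin 2) ℝ) } ∧
    { M : Matrix (Fin 2) (Fin 2) ℝ | Kmap l1 m1 m1 M = 0 }
      = { M : Matrix (Fin 2) (Fin 2) ℝ | ∃ α β : ℝ, M = !![α, β; β, -α] } := by
  constructor
  · ext M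
    simp only [Set.mem_setOf_eq]
    constructor
    · intro h
      rw [Kmap_eq] at h
      have h00 := congrFun (congrFun h 0) 0
      have h01 := congrFun (congrFun h 0) 1
      have h10 := congrFun (congrFun h 1) 0
      have h11 := congrFun (congrFun h 1) 1
      simp [Matrix.zero_apply] at h00 h01 h10 h11
      have hbc : M 0 1 = M 1 0 := by
        have : 2 * m1 * (M 0 1 - M 1 0) = 0 := by linear_combination h01 - h10
        have := mul_eq_zero.1 this
        rcases this with h' | h'
        · linarith
        · linarith [sub_eq_zero.1 h']
      have hb0 : M 0 1 = 0 := by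
        have : (2 * m2 - 2 * m1) * M 0 1 = 0 := by linear_combination h01 + (m2 - 2*m1) * hbc
        rcases mul_eq_zero.1 this with h' | h'
        · linarith
        · exact h'
      have had : M 0 0 = M 1 1 := by
        have : (2 * m2 - 2 * m1) * (M 0 0 - M 1 1) = 0 := by
          linear_combination h00 - h11
        rcases mul_eq_zero.1 this with h' | h'
        · linarith
        · linarith [sub_eq_zero.1 h']
      refine ⟨M 0 0, ?_⟩
      ext i j
      fin_cases i <;> fin_cases j <;>
        simp [Matrix.one_apply, had, hb0, hbc ▸ hb0]
    · rintro ⟨γ, rfl⟩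
      rw [Kmap_eq]
      ext i j
      fin_cases i <;> fin_cases j <;>
        simp [Matrix.one_apply] <;> linear_combination (-2*γ) * heq
  · ext M
    simp only [Set.mem_setOf_eq]
    constructor
    · intro h
      rw [Kmap_eq] at h
      have h00 := congrFun (congrFun h 0) 0
      have h01 := congrFun (congrFun h 0) 1
      have h10 := congrFun (congrFun h 1) 0
      simp [Matrix.zero_apply] at h00 h01 h10
      have hbc : M 1 0 = M 0 1 := by
        have : m1 * (M 0 1 - M 1 0) = 0 := by linear_combination h01
        rcases mul_eq_zero.1 this with h' | h'
        · linarith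
        · linarith [sub_eq_zero.1 h']
      have had : M 1 1 = -(M 0 0) := by
        have : (l1 + 2 * m1) * (M 0 0 + M 1 1) = 0 := by linear_combination h00
        rcases mul_eq_zero.1 this with h' | h'
        · linarith
        · linarith
      refine ⟨M 0 0, M 0 1, ?_⟩
      ext i j
      fin_cases i <;> fin_cases j <;> simp [hbc, had]
    · rintro ⟨α, β, rfl⟩
      rw [Kmap_eq]
      ext i j
      fin_cases i <;> fin_cases j <;> simp <;> ring
end

section
/- Let λ₁, μ₁, λ₂, μ₂ ∈ ℝ satisfy the Gutiérrez conditions 0 < −λ₂−μ₂ = μ₁ < μ₂ and λ₁+μ₁ > 0, and set K_j M := λ_j tr(M) I₂ + μ_j (M + Mᵀ) + 2μ₁ cof(M) for j = 1, 2. Then for every unit vector ν ∈ ℝ² and every ξ ∈ ℝ² there exists a unique 2×2 real matrix Φ such that (K₁Φ)ν = ξ and (K₂Φ)ν = ξ. -/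
open Matrix

/-!
Both `K₁` and `K₂` split along the decomposition of a 2×2 matrix into its conformal part
`!![p, q; -q, p]` and its anticonformal part `!![r, t; t, -r]`: `K(λ,μ)` multiplies the conformal
part by `(2(λ + μ + μ₁), 2μ₁)` and the anticonformal part by `2(μ - μ₁)`. A nonzero matrix of either
kind is invertible, its determinant being `±(p² + q²)`. Under the Gutiérrez conditions `K₁` kills
the anticonformal part and `K₂` the trace, so if `(K₁Φ)ν = (K₂Φ)ν = 0` then first the conformal
and then the anticonformal part of `Φ` vanish. Hence `Φ ↦ ((K₁Φ)ν, (K₂Φ)ν)` is an injective linear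
map `ℝ⁴ → ℝ⁴`, and therefore bijective.
-/

def conformalMatrix (p q : ℝ) : Matrix (Fin 2) (Fin 2) ℝ := !![p, q; -q, p]

def anticonformalMatrix (r t : ℝ) : Matrix (Fin 2) (Fin 2) ℝ := !![r, t; t, -r]

theorem det_conformalMatrix (p q : ℝ) : (conformalMatrix p q).det = p ^ 2 + q ^ 2 := by
  rw [conformalMatrix, det_fin_two_of]
  ring

theorem det_anticonformalMatrix (r t : ℝ) : (anticonformalMatrix r t).det = -(r ^ 2 + t ^ 2) := by
  rw [anticonformalMatrix, det_fin_two_of]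
  ring

theorem anticonformalMatrix_zero : anticonformalMatrix 0 0 = 0 := by
  ext i j
  fin_cases i <;> fin_cases j <;> simp [anticonformalMatrix]

theorem conformalMatrix_zero : conformalMatrix 0 0 = 0 := by
  ext i j
  fin_cases i <;> fin_cases j <;> simp [conformalMatrix]

theorem eq_zero_of_conformalMatrix_mulVec_eq_zero {p q : ℝ} {ν : Fin 2 → ℝ} (hν : ν ≠ 0)
    (h : conformalMatrix p q *ᵥ ν = 0) : p = 0 ∧ q = 0 := by
  have hdet := exists_mulVec_eq_zero_iff.1 ⟨ν, hν, h⟩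
  rw [det_conformalMatrix] at hdet
  constructor <;> nlinarith [sq_nonneg p, sq_nonneg q]

theorem eq_zero_of_anticonformalMatrix_mulVec_eq_zero {r t : ℝ} {ν : Fin 2 → ℝ} (hν : ν ≠ 0)
    (h : anticonformalMatrix r t *ᵥ ν = 0) : r = 0 ∧ t = 0 := by
  have hdet := exists_mulVec_eq_zero_iff.1 ⟨ν, hν, h⟩
  rw [det_anticonformalMatrix] at hdet
  constructor <;> nlinarith [sq_nonneg r, sq_nonneg t]

theorem Kmap_eq_conformalMatrix_add_anticonformalMatrix (l m m1 : ℝ)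
    (M : Matrix (Fin 2) (Fin 2) ℝ) :
    Kmap l m m1 M =
      conformalMatrix ((l + m + m1) * M.trace) (m1 * (M 0 1 - M 1 0)) +
        anticonformalMatrix ((m - m1) * (M 0 0 - M 1 1)) ((m - m1) * (M 0 1 + M 1 0)) := by
  ext i j
  fin_cases i <;> fin_cases j <;>
    simp [Kmap, cof, conformalMatrix, anticonformalMatrix, trace_fin_two] <;> ring

theorem Kmap_add (l m m1 : ℝ) (M N : Matrix (Fin 2) (Fin 2) ℝ) :
    Kmap l m m1 (M + N) = Kmap l m m1 M + Kmap l m m1 N := by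
  ext i j
  fin_cases i <;> fin_cases j <;> simp [Kmap, cof, trace_fin_two] <;> ring

theorem Kmap_smul (l m m1 c : ℝ) (M : Matrix (Fin 2) (Fin 2) ℝ) :
    Kmap l m m1 (c • M) = c • Kmap l m m1 M := by
  ext i j
  fin_cases i <;> fin_cases j <;> simp [Kmap, cof, trace_fin_two] <;> ring

noncomputable def tractionPair (l1 m1 l2 m2 : ℝ) (ν : Fin 2 → ℝ) :
    Matrix (Fin 2) (Fin 2) ℝ →ₗ[ℝ] (Fin 2 → ℝ) × (Fin 2 → ℝ) where
  toFun Φ := (Kmap l1 m1 m1 Φ *ᵥ ν, Kmap l2 m2 m1 Φ *ᵥ ν)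
  map_add' M N := by simp only [Kmap_add, add_mulVec, Prod.mk_add_mk]
  map_smul' c M := by simp only [Kmap_smul, smul_mulVec, Prod.smul_mk, RingHom.id_apply]

theorem tractionPair_injective {l1 m1 l2 m2 : ℝ} (hm1 : m1 ≠ 0) (hl1 : l1 + 2 * m1 ≠ 0)
    (hl2 : l2 + m2 + m1 = 0) (hm2 : m2 - m1 ≠ 0) {ν : Fin 2 → ℝ} (hν : ν ≠ 0) :
    Function.Injective (tractionPair l1 m1 l2 m2 ν) := by
  refine (injective_iff_map_eq_zero _).2 fun Φ hΦ => ?_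
  obtain ⟨h1, h2⟩ := Prod.ext_iff.1 hΦ
  simp only [tractionPair, LinearMap.coe_mk, AddHom.coe_mk, Prod.fst_zero, Prod.snd_zero,
    Kmap_eq_conformalMatrix_add_anticonformalMatrix, sub_self, zero_mul,
    anticonformalMatrix_zero, add_zero, hl2] at h1 h2
  obtain ⟨htr, hskew⟩ := eq_zero_of_conformalMatrix_mulVec_eq_zero hν h1
  rw [show l1 + m1 + m1 = l1 + 2 * m1 by ring] at htr
  have hskew' : Φ 0 1 - Φ 1 0 = 0 := (mul_eq_zero.1 hskew).resolve_left hm1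
  rw [hskew', mul_zero, conformalMatrix_zero, zero_add] at h2
  obtain ⟨hdiag, hoff⟩ := eq_zero_of_anticonformalMatrix_mulVec_eq_zero hν h2
  have htr' : Φ 0 0 + Φ 1 1 = 0 := by
    simpa [trace_fin_two, hl1] using htr
  have hdiag' : Φ 0 0 - Φ 1 1 = 0 := (mul_eq_zero.1 hdiag).resolve_left hm2
  have hoff' : Φ 0 1 + Φ 1 0 = 0 := (mul_eq_zero.1 hoff).resolve_left hm2
  ext i j
  fin_cases i <;> fin_cases j <;> simp <;> linarith

theorem stmt5 (l1 m1 l2 m2 : ℝ)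
    (hpos : 0 < m1) (heq : -l2 - m2 = m1) (hlt : m1 < m2) (hvse : 0 < l1 + m1)
    (ν : Fin 2 → ℝ) (hν : Real.sqrt (ν 0 ^ 2 + ν 1 ^ 2) = 1) (ξ : Fin 2 → ℝ) :
    ∃! Φ : Matrix (Fin 2) (Fin 2) ℝ,
      (Kmap l1 m1 m1 Φ) *ᵥ ν = ξ ∧ (Kmap l2 m2 m1 Φ) *ᵥ ν = ξ := by
  have hν0 : ν ≠ 0 := by
    rintro rfl
    simp at hν
  have hinj : Function.Injective (tractionPair l1 m1 l2 m2 ν) :=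
    tractionPair_injective hpos.ne' (by linarith) (by linarith) (by linarith) hν0
  have hsurj := (LinearMap.injective_iff_surjective_of_finrank_eq_finrank
    (by simp [Module.finrank_matrix]) (f := tractionPair l1 m1 l2 m2 ν)).1 hinj
  simpa only [tractionPair, LinearMap.coe_mk, AddHom.coe_mk, Prod.ext_iff] using
    (Function.Bijective.existsUnique ⟨hinj, hsurj⟩ (ξ, ξ))
end

section
/- Let v : ℝ² → ℝ² be continuously differentiable with compact support. Then the Jacobian determinant of v integrates to zero: ∫_{ℝ²} det(Dv(x)) dx = 0, where Dv(x) is the 2×2 Jacobian matrix of v at x (the determinant is a null Lagrangian). -/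
open Matrix MeasureTheory

/-- The Jacobian matrix of `v : ℝ² → ℝ²`: `(Dv)_{ij} = ∂v_i/∂x_j`. -/
noncomputable def jacobian (v : (Fin 2 → ℝ) → (Fin 2 → ℝ)) (x : Fin 2 → ℝ) :
    Matrix (Fin 2) (Fin 2) ℝ :=
  Matrix.of fun i j => fderiv ℝ v x (Pi.single j 1) i

/-!
For a `C²` map, `det Dv = ∂₁v₁ ∂₂v₂ - ∂₂v₁ ∂₁v₂`, and integrating by parts twice,
`∫ ∂₁v₁ ∂₂v₂ = -∫ v₁ ∂₁∂₂v₂ = -∫ v₁ ∂₂∂₁v₂ = ∫ ∂₂v₁ ∂₁v₂` by symmetry of the second derivative.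
A `C¹` map is the limit of its mollifications `φₖ ⋆ v`: these are smooth, supported in a fixed
compact set, and `D(φₖ ⋆ v) = φₖ ⋆ Dv` converges pointwise to `Dv` with a uniform bound, so
dominated convergence carries `∫ det D(φₖ ⋆ v) = 0` over to `v`.
-/

open Filter Metric ContinuousLinearMap
open scoped Convolution Topology ContDiff Pointwise

section AddHaar

variable {E F : Type*} [NormedAddCommGroup E] [NormedSpace ℝ E] [FiniteDimensional ℝ E]
  [MeasurableSpace E] [BorelSpace E] {μ : Measure E} [μ.IsAddHaarMeasure]
  [NormedAddCommGroup F] [NormedSpace ℝ F]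

theorem integral_fderiv_mul_eq_neg_mul_fderiv {f g : E → ℝ} (hf : ContDiff ℝ 1 f)
    (hfs : HasCompactSupport f) (hg : ContDiff ℝ 1 g) (a : E) :
    ∫ x, fderiv ℝ f x a * g x ∂μ = -∫ x, f x * fderiv ℝ g x a ∂μ := by
  have hf' : Continuous (fderiv ℝ f · a) :=
    (hf.continuous_fderiv one_ne_zero).clm_apply continuous_const
  have hg' : Continuous (fderiv ℝ g · a) :=
    (hg.continuous_fderiv one_ne_zero).clm_apply continuous_const
  rw [integral_mul_fderiv_eq_neg_fderiv_mul_of_integrable, neg_neg]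
  · exact (hf'.mul hg.continuous).integrable_of_hasCompactSupport (hfs.fderiv_apply ℝ a).mul_right
  · exact (hf.continuous.mul hg').integrable_of_hasCompactSupport hfs.mul_right
  · exact (hf.continuous.mul hg.continuous).integrable_of_hasCompactSupport hfs.mul_right
  · exact fun x _ => hf.differentiable one_ne_zero x
  · exact fun x _ => hg.differentiable one_ne_zero x

theorem integral_fderiv_mul_fderiv_comm {f g : E → ℝ} (hf : ContDiff ℝ 1 f)
    (hfs : HasCompactSupport f) (hg : ContDiff ℝ 2 g) (a b : E) :
    ∫ x, fderiv ℝ f x a * fderiv ℝ g x b ∂μ = ∫ x, fderiv ℝ f x b * fderiv ℝ g x a ∂μ := by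
  have hDg : ContDiff ℝ 1 (fderiv ℝ g) := hg.fderiv_right one_add_one_eq_two.le
  have hsymm : ∀ x, fderiv ℝ (fderiv ℝ g · b) x a = fderiv ℝ (fderiv ℝ g · a) x b := by
    intro x
    have hd : DifferentiableAt ℝ (fderiv ℝ g) x := hDg.differentiable one_ne_zero x
    rw [fderiv_clm_apply hd (differentiableAt_const _),
      fderiv_clm_apply hd (differentiableAt_const _)]
    simpa using hg.contDiffAt.isSymmSndFDerivAt (by simp) a b
  calc ∫ x, fderiv ℝ f x a * fderiv ℝ g x b ∂μ
      = -∫ x, f x * fderiv ℝ (fderiv ℝ g · b) x a ∂μ :=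
        integral_fderiv_mul_eq_neg_mul_fderiv hf hfs (hDg.clm_apply contDiff_const) a
    _ = -∫ x, f x * fderiv ℝ (fderiv ℝ g · a) x b ∂μ := by simp_rw [hsymm]
    _ = ∫ x, fderiv ℝ f x b * fderiv ℝ g x a ∂μ :=
        (integral_fderiv_mul_eq_neg_mul_fderiv hf hfs (hDg.clm_apply contDiff_const) b).symm

namespace ContDiffBump

variable (φ : ContDiffBump (0 : E))

theorem norm_normed_convolution_le {g : E → F} {C : ℝ} (hg : ∀ x, ‖g x‖ ≤ C) (x : E) :
    ‖(φ.normed μ ⋆[lsmul ℝ ℝ, μ] g) x‖ ≤ C := by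
  rw [convolution_def]
  refine (norm_integral_le_of_norm_le (φ.integrable_normed.mul_const C)
    (ae_of_all _ fun t => ?_)).trans_eq ?_
  · rw [lsmul_apply, norm_smul, Real.norm_of_nonneg (φ.nonneg_normed t)]
    exact mul_le_mul_of_nonneg_left (hg _) (φ.nonneg_normed t)
  · rw [integral_mul_const, φ.integral_normed, one_mul]

theorem fderiv_normed_convolution {v : E → F} (hv : ContDiff ℝ 1 v) (hvs : HasCompactSupport v)
    (x : E) :
    fderiv ℝ (φ.normed μ ⋆[lsmul ℝ ℝ, μ] v) x = (φ.normed μ ⋆[lsmul ℝ ℝ, μ] fderiv ℝ v) x := by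
  have h := hvs.hasFDerivAt_convolution_right (lsmul ℝ ℝ)
    (φ.integrable_normed (μ := μ)).locallyIntegrable hv x
  have hL : (lsmul ℝ ℝ : ℝ →L[ℝ] F →L[ℝ] F).precompR E = lsmul ℝ ℝ := by
    ext
    simp [precompR]
  rw [hL] at h
  exact h.fderiv

end ContDiffBump

variable [FiniteDimensional ℝ F] {H : Type*} [NormedAddCommGroup H] [NormedSpace ℝ H]
  {Φ : (E →L[ℝ] F) → H}

theorem tendsto_integral_comp_fderiv_normed_convolution (hΦ : Continuous Φ) (hΦ0 : Φ 0 = 0)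
    {v : E → F} (hv : ContDiff ℝ 1 v) (hvs : HasCompactSupport v) {φ : ℕ → ContDiffBump (0 : E)}
    (hφ : Tendsto (fun k => (φ k).rOut) atTop (𝓝 0)) :
    Tendsto (fun k => ∫ x, Φ (fderiv ℝ ((φ k).normed μ ⋆[lsmul ℝ ℝ, μ] v) x) ∂μ) atTop
      (𝓝 (∫ x, Φ (fderiv ℝ v x) ∂μ)) := by
  have hDv : Continuous (fderiv ℝ v) := hv.continuous_fderiv one_ne_zero
  obtain ⟨C, hC⟩ := (hvs.fderiv ℝ).exists_bound_of_continuous hDv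
  obtain ⟨M, hM⟩ :=
    (isCompact_closedBall (0 : E →L[ℝ] F) C).exists_bound_of_continuousOn hΦ.continuousOn
  set K := closedBall (0 : E) 1 + tsupport v
  have hK : IsCompact K := (isCompact_closedBall _ _).add hvs
  simp_rw [ContDiffBump.fderiv_normed_convolution _ hv hvs]
  refine tendsto_integral_filter_of_dominated_convergence (K.indicator fun _ => M) ?_ ?_ ?_ ?_
  · refine Eventually.of_forall fun k => (hΦ.comp ?_).aestronglyMeasurable
    exact (hvs.fderiv ℝ).continuous_convolution_right _
      (φ k).integrable_normed.locallyIntegrable hDv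
  · filter_upwards [hφ.eventually (eventually_le_nhds one_pos)] with k hk
    refine ae_of_all _ fun x => ?_
    by_cases hx : x ∈ K
    · rw [Set.indicator_of_mem hx]
      exact hM _ (mem_closedBall_zero_iff.2 ((φ k).norm_normed_convolution_le hC x))
    · have hsupp : Function.support ((φ k).normed μ ⋆[lsmul ℝ ℝ, μ] fderiv ℝ v) ⊆ K := by
        refine (support_convolution_subset _).trans (Set.add_subset_add ?_ ?_)
        · rw [(φ k).support_normed_eq]
          exact ball_subset_closedBall.trans (closedBall_subset_closedBall hk)
        · exact support_fderiv_subset ℝ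
      rw [Set.indicator_of_notMem hx, Function.notMem_support.1 fun h => hx (hsupp h), hΦ0,
        norm_zero]
  · exact (integrable_indicator_iff hK.measurableSet).2 (integrableOn_const hK.measure_lt_top.ne)
  · exact ae_of_all _ fun x =>
      (hΦ.tendsto _).comp (ContDiffBump.convolution_tendsto_right_of_continuous hφ hDv x)

theorem integral_comp_fderiv_eq_zero_of_forall_contDiff (hΦ : Continuous Φ) (hΦ0 : Φ 0 = 0)
    (h : ∀ w : E → F, ContDiff ℝ ∞ w → HasCompactSupport w → ∫ x, Φ (fderiv ℝ w x) ∂μ = 0)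
    {v : E → F} (hv : ContDiff ℝ 1 v) (hvs : HasCompactSupport v) :
    ∫ x, Φ (fderiv ℝ v x) ∂μ = 0 := by
  let φ : ℕ → ContDiffBump (0 : E) := fun k =>
    ⟨1 / (k + 1) / 2, 1 / (k + 1), by positivity, half_lt_self (by positivity)⟩
  refine tendsto_nhds_unique (tendsto_integral_comp_fderiv_normed_convolution hΦ hΦ0 hv hvs
    (φ := φ) tendsto_one_div_add_atTop_nhds_zero_nat) (tendsto_const_nhds.congr fun k => ?_)
  exact (h _ ((φ k).hasCompactSupport_normed.contDiff_convolution_left _ (φ k).contDiff_normed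
    hv.continuous.locallyIntegrable) ((φ k).hasCompactSupport_normed.convolution _ hvs)).symm

end AddHaar

theorem det_jacobian (v : (Fin 2 → ℝ) → (Fin 2 → ℝ)) (x : Fin 2 → ℝ) :
    (jacobian v x).det = (fderiv ℝ v x).det := by
  rw [ContinuousLinearMap.det, ← LinearMap.det_toMatrix']
  rfl

theorem integral_det_jacobian_eq_zero_of_contDiff_two (w : (Fin 2 → ℝ) → (Fin 2 → ℝ))
    (hw : ContDiff ℝ 2 w) (hws : HasCompactSupport w) :
    ∫ x, (jacobian w x).det = 0 := by
  have hwi : ∀ i, ContDiff ℝ 2 (w · i) := fun i => (contDiff_apply ℝ ℝ i).comp hw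
  have hwsi : ∀ i, HasCompactSupport (w · i) := fun i =>
    hws.comp_left (g := fun z : Fin 2 → ℝ => z i) rfl
  have hentry : ∀ x i j, jacobian w x i j = fderiv ℝ (w · i) x (Pi.single j 1) := by
    intro x i j
    rw [fderiv_apply (hw.differentiable two_ne_zero x)]
    rfl
  have hint : ∀ i k (a b : Fin 2 → ℝ),
      Integrable (fun x => fderiv ℝ (w · i) x a * fderiv ℝ (w · k) x b) := by
    intro i k a b
    refine Continuous.integrable_of_hasCompactSupport ?_ ((hwsi i).fderiv_apply ℝ a).mul_right
    exact ((hwi i).continuous_fderiv two_ne_zero).clm_apply continuous_const |>.mul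
      (((hwi k).continuous_fderiv two_ne_zero).clm_apply continuous_const)
  simp_rw [det_fin_two, hentry]
  rw [integral_sub (hint _ _ _ _) (hint _ _ _ _),
    integral_fderiv_mul_fderiv_comm ((hwi 0).of_le one_le_two) (hwsi 0) (hwi 1), sub_self]

/-- The determinant is a null Lagrangian: the Jacobian determinant of a `C¹`
compactly supported map `v : ℝ² → ℝ²` integrates to zero. -/
theorem stmt6 (v : (Fin 2 → ℝ) → (Fin 2 → ℝ))
    (hv : ContDiff ℝ 1 v) (hsupp : HasCompactSupport v) :
    ∫ x : Fin 2 → ℝ, (jacobian v x).det = 0 := by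
  simp_rw [det_jacobian]
  refine integral_comp_fderiv_eq_zero_of_forall_contDiff continuous_det
    (by simp [ContinuousLinearMap.det]) (fun w hw hws => ?_) hv hsupp
  simpa only [det_jacobian] using
    integral_det_jacobian_eq_zero_of_contDiff_two w (contDiff_infty.1 hw 2) hws
end

section
/- Let λ̄, μ̄₁, μ̄₂ ∈ ℝ satisfy λ̄ < 0, λ̄ + 2μ̄₁ > 0, μ̄₂ > 0 and λ̄ + 2μ̄₂ > 0. Then there exists c > 0 such that for every smooth compactly supported φ = (φ₁,φ₂) : ℝ² → ℝ², ∫_{ℝ²} [ (λ̄+2μ̄₁)(∂₁φ₁)² + 2λ̄ (∂₁φ₁)(∂₂φ₂) + μ̄₂ (∂₂φ₁ + ∂₁φ₂)² ] dx ≥ c ∫_{ℝ²} [ (∂₁φ₁)² + (∂₂φ₁)² + (∂₁φ₂)² ] dx. -/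
open MeasureTheory

/-- `∂ᵢφⱼ`, the partial derivative of the `j`-th component of `φ` in direction `xᵢ`
(indices `0, 1` standing for `1, 2`). -/
noncomputable def pd (φ : (Fin 2 → ℝ) → (Fin 2 → ℝ)) (i j : Fin 2) (x : Fin 2 → ℝ) : ℝ :=
  fderiv ℝ φ x (Pi.single i 1) j

private lemma pdc_aux {h : (Fin 2 → ℝ) → ℝ} (hh : ContDiff ℝ (⊤ : ℕ∞) h) (u : Fin 2 → ℝ) :
    ContDiff ℝ (⊤ : ℕ∞) fun x => fderiv ℝ h x u :=
  (ContinuousLinearMap.apply ℝ ℝ u).contDiff.comp (hh.fderiv_right (by simp))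

/-- Integration by parts swap: `∫ ∂ᵥf ∂𝓌g = ∫ ∂𝓌f ∂ᵥg`. -/
private lemma ibp_swap {f g : (Fin 2 → ℝ) → ℝ} (hf : ContDiff ℝ (⊤ : ℕ∞) f) (hg : ContDiff ℝ (⊤ : ℕ∞) g)
    (hfs : HasCompactSupport f) (v w : Fin 2 → ℝ) :
    ∫ x, fderiv ℝ f x v * fderiv ℝ g x w = ∫ x, fderiv ℝ f x w * fderiv ℝ g x v := by
  have A : ∀ u₁ u₂ : Fin 2 → ℝ,
      ∫ x, f x * fderiv ℝ (fun y => fderiv ℝ g y u₂) x u₁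
        = - ∫ x, fderiv ℝ f x u₁ * fderiv ℝ g x u₂ := by
    intro u₁ u₂
    apply integral_mul_fderiv_eq_neg_fderiv_mul_of_integrable
    · apply Continuous.integrable_of_hasCompactSupport
      · exact ((pdc_aux hf u₁).continuous).mul ((pdc_aux hg u₂).continuous)
      · exact (hfs.fderiv_apply ℝ u₁).mul_right
    · apply Continuous.integrable_of_hasCompactSupport
      · exact (hf.continuous).mul ((pdc_aux (pdc_aux hg u₂) u₁).continuous)
      · exact hfs.mul_right
    · apply Continuous.integrable_of_hasCompactSupport
      · exact (hf.continuous).mul ((pdc_aux hg u₂).continuous)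
      · exact hfs.mul_right
    · exact fun x _ => hf.differentiable (by simp) x
    · exact fun x _ => (pdc_aux hg u₂).differentiable (by simp) x
  have hschwarz : ∀ x, fderiv ℝ (fun y => fderiv ℝ g y w) x v
      = fderiv ℝ (fun y => fderiv ℝ g y v) x w := by
    intro x
    have hdiff : DifferentiableAt ℝ (fderiv ℝ g) x :=
      ((hg.fderiv_right (m := (⊤ : ℕ∞)) (by simp)).differentiable (by simp)) x
    have key : ∀ u : Fin 2 → ℝ, fderiv ℝ (fun y => fderiv ℝ g y u) x =
        (ContinuousLinearMap.apply ℝ ℝ u).comp (fderiv ℝ (fderiv ℝ g) x) := by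
      intro u
      have h : (fun y => fderiv ℝ g y u) = (ContinuousLinearMap.apply ℝ ℝ u) ∘ (fderiv ℝ g) := rfl
      rw [h, fderiv_comp x (ContinuousLinearMap.differentiableAt _) hdiff,
        ContinuousLinearMap.fderiv]
    simp only [key, ContinuousLinearMap.coe_comp', Function.comp_apply,
      ContinuousLinearMap.apply_apply]
    exact ((hg.contDiffAt).isSymmSndFDerivAt (by rw [minSmoothness_of_isRCLikeNormedField]; exact WithTop.coe_le_coe.mpr le_top)).eq v w
  have h1 := A v w
  have h2 := A w v
  rw [show (fun x => f x * fderiv ℝ (fun y => fderiv ℝ g y w) x v)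
      = fun x => f x * fderiv ℝ (fun y => fderiv ℝ g y v) x w
      from funext fun x => by rw [hschwarz x]] at h1
  rw [h2] at h1
  linarith

private lemma pd_eq_aux (φ : (Fin 2 → ℝ) → (Fin 2 → ℝ)) (hφ : ContDiff ℝ (⊤ : ℕ∞) φ) (i j : Fin 2)
    (x : Fin 2 → ℝ) :
    pd φ i j x = fderiv ℝ (fun y => φ y j) x (Pi.single i 1) := by
  have h : (fun y => φ y j) =
      (ContinuousLinearMap.proj (R := ℝ) (φ := fun _ : Fin 2 => ℝ) j) ∘ φ := rfl
  rw [h, fderiv_comp x (ContinuousLinearMap.differentiableAt _) (hφ.differentiable (by simp) x)]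
  simp [pd, ContinuousLinearMap.fderiv]

/-- Coercivity of the homogenized Gutiérrez quadratic form on all of `ℝ²`,
with a constant independent of the test function. -/
theorem stmt9 (lb mb1 mb2 : ℝ)
    (hlb : lb < 0) (h1 : 0 < lb + 2 * mb1) (h2 : 0 < mb2) (h3 : 0 < lb + 2 * mb2) :
    ∃ c : ℝ, 0 < c ∧
      ∀ φ : (Fin 2 → ℝ) → (Fin 2 → ℝ), ContDiff ℝ (⊤ : ℕ∞) φ → HasCompactSupport φ →
        c * ∫ x : Fin 2 → ℝ,
              ((pd φ 0 0 x) ^ 2 + (pd φ 1 0 x) ^ 2 + (pd φ 0 1 x) ^ 2)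
          ≤ ∫ x : Fin 2 → ℝ,
              ((lb + 2 * mb1) * (pd φ 0 0 x) ^ 2
                + 2 * lb * (pd φ 0 0 x) * (pd φ 1 1 x)
                + mb2 * (pd φ 1 0 x + pd φ 0 1 x) ^ 2) := by
  set c₀ : ℝ := min (lb + 2 * mb1) (min (-lb) (lb + 2 * mb2)) with hc₀
  have hc₀pos : 0 < c₀ := lt_min h1 (lt_min (by linarith) h3)
  refine ⟨c₀, hc₀pos, ?_⟩
  intro φ hφ hφs
  -- component functions
  set f : (Fin 2 → ℝ) → ℝ := fun y => φ y 0 with hfdef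
  set g : (Fin 2 → ℝ) → ℝ := fun y => φ y 1 with hgdef
  have hf : ContDiff ℝ (⊤ : ℕ∞) f :=
    (ContinuousLinearMap.proj (R := ℝ) (φ := fun _ : Fin 2 => ℝ) 0).contDiff.comp hφ
  have hg : ContDiff ℝ (⊤ : ℕ∞) g :=
    (ContinuousLinearMap.proj (R := ℝ) (φ := fun _ : Fin 2 => ℝ) 1).contDiff.comp hφ
  have hfs : HasCompactSupport f := hφs.comp_left (g := fun u : Fin 2 → ℝ => u 0) rfl
  have hgs : HasCompactSupport g := hφs.comp_left (g := fun u : Fin 2 → ℝ => u 1) rfl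
  set e₀ : Fin 2 → ℝ := Pi.single 0 1 with he₀
  set e₁ : Fin 2 → ℝ := Pi.single 1 1 with he₁
  set a : (Fin 2 → ℝ) → ℝ := fun x => fderiv ℝ f x e₀ with ha
  set b : (Fin 2 → ℝ) → ℝ := fun x => fderiv ℝ f x e₁ with hb
  set cc : (Fin 2 → ℝ) → ℝ := fun x => fderiv ℝ g x e₀ with hcc
  set d : (Fin 2 → ℝ) → ℝ := fun x => fderiv ℝ g x e₁ with hd
  have hpd00 : ∀ x, pd φ 0 0 x = a x := fun x => pd_eq_aux φ hφ 0 0 x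
  have hpd10 : ∀ x, pd φ 1 0 x = b x := fun x => pd_eq_aux φ hφ 1 0 x
  have hpd01 : ∀ x, pd φ 0 1 x = cc x := fun x => pd_eq_aux φ hφ 0 1 x
  have hpd11 : ∀ x, pd φ 1 1 x = d x := fun x => pd_eq_aux φ hφ 1 1 x
  -- continuity and compact support of the derivatives
  have hac : Continuous a := (pdc_aux hf e₀).continuous
  have hbc : Continuous b := (pdc_aux hf e₁).continuous
  have hccc : Continuous cc := (pdc_aux hg e₀).continuous
  have hdc : Continuous d := (pdc_aux hg e₁).continuous
  have has : HasCompactSupport a := hfs.fderiv_apply ℝ e₀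
  have hbs : HasCompactSupport b := hfs.fderiv_apply ℝ e₁
  have hcs : HasCompactSupport cc := hgs.fderiv_apply ℝ e₀
  have hds : HasCompactSupport d := hgs.fderiv_apply ℝ e₁
  -- integration by parts identity
  have hswap : ∫ x, a x * d x = ∫ x, b x * cc x := ibp_swap hf hg hfs e₀ e₁
  -- integrable pieces
  have hG : Integrable (fun x => (lb + 2 * mb1) * (a x) ^ 2 + mb2 * (b x + cc x) ^ 2) := by
    apply Continuous.integrable_of_hasCompactSupport
    · fun_prop
    · exact (has.comp_left (g := fun t : ℝ => (lb + 2 * mb1) * t ^ 2) (by simp)).add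
        ((hbs.add hcs).comp_left (g := fun t : ℝ => mb2 * t ^ 2) (by simp))
  have had : Integrable (fun x => a x * d x) := by
    apply Continuous.integrable_of_hasCompactSupport
    · fun_prop
    · exact has.mul_right
  have hbcc : Integrable (fun x => b x * cc x) := by
    apply Continuous.integrable_of_hasCompactSupport
    · fun_prop
    · exact hbs.mul_right
  have hsq : Integrable (fun x => (a x) ^ 2 + (b x) ^ 2 + (cc x) ^ 2) := by
    apply Continuous.integrable_of_hasCompactSupport
    · fun_prop
    · exact ((has.comp_left (g := fun t : ℝ => t ^ 2) (by simp)).add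
        (hbs.comp_left (g := fun t : ℝ => t ^ 2) (by simp))).add
        (hcs.comp_left (g := fun t : ℝ => t ^ 2) (by simp))
  have hgood : Integrable (fun x => (lb + 2 * mb1) * (a x) ^ 2 + mb2 * (b x + cc x) ^ 2
      + 2 * lb * (b x * cc x)) :=
    hG.add (hbcc.const_mul (2 * lb))
  -- rewrite the RHS integral
  have eR : ∫ x, ((lb + 2 * mb1) * (pd φ 0 0 x) ^ 2
        + 2 * lb * (pd φ 0 0 x) * (pd φ 1 1 x)
        + mb2 * (pd φ 1 0 x + pd φ 0 1 x) ^ 2)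
      = ∫ x, ((lb + 2 * mb1) * (a x) ^ 2 + mb2 * (b x + cc x) ^ 2 + 2 * lb * (b x * cc x)) := by
    have step1 : (fun x => (lb + 2 * mb1) * (pd φ 0 0 x) ^ 2
          + 2 * lb * (pd φ 0 0 x) * (pd φ 1 1 x)
          + mb2 * (pd φ 1 0 x + pd φ 0 1 x) ^ 2)
        = fun x => ((lb + 2 * mb1) * (a x) ^ 2 + mb2 * (b x + cc x) ^ 2)
          + 2 * lb * (a x * d x) := by
      funext x; rw [hpd00 x, hpd10 x, hpd01 x, hpd11 x]; ring
    have step2 : (fun x => (lb + 2 * mb1) * (a x) ^ 2 + mb2 * (b x + cc x) ^ 2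
          + 2 * lb * (b x * cc x))
        = fun x => ((lb + 2 * mb1) * (a x) ^ 2 + mb2 * (b x + cc x) ^ 2)
          + 2 * lb * (b x * cc x) := by
      funext x; ring
    rw [step1, step2, integral_add hG (had.const_mul (2 * lb)),
      integral_add hG (hbcc.const_mul (2 * lb)), integral_const_mul, integral_const_mul, hswap]
  -- rewrite the LHS integral
  have eL : ∫ x, ((pd φ 0 0 x) ^ 2 + (pd φ 1 0 x) ^ 2 + (pd φ 0 1 x) ^ 2)
      = ∫ x, ((a x) ^ 2 + (b x) ^ 2 + (cc x) ^ 2) := by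
    congr 1; funext x; rw [hpd00 x, hpd10 x, hpd01 x]
  rw [eR, eL, ← integral_const_mul]
  apply integral_mono (hsq.const_mul c₀) hgood
  intro x
  dsimp only
  have hk1 : c₀ ≤ lb + 2 * mb1 := min_le_left _ _
  have hk2 : c₀ ≤ -lb := le_trans (min_le_right _ _) (min_le_left _ _)
  have hk3 : c₀ ≤ lb + 2 * mb2 := le_trans (min_le_right _ _) (min_le_right _ _)
  nlinarith [mul_nonneg (sub_nonneg.2 hk1) (sq_nonneg (a x)),
    mul_nonneg (sub_nonneg.2 hk3) (sq_nonneg (b x + cc x)),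
    mul_nonneg (sub_nonneg.2 hk2) (sq_nonneg (b x - cc x)),
    sq_nonneg (b x + cc x), sq_nonneg (b x - cc x)]
end

section
/- Let λ̄, μ̄₁, μ̄₂ ∈ ℝ satisfy λ̄ < 0, λ̄ + 2μ̄₁ > 0, μ̄₂ > 0 and λ̄ + 2μ̄₂ > 0, and let Ω ⊂ ℝ² be a bounded open set. Then there exists c_Ω > 0 such that for every smooth compactly supported φ = (φ₁,φ₂) : Ω → ℝ², ∫_Ω [ (λ̄+2μ̄₁)(∂₁φ₁)² + 2λ̄ (∂₁φ₁)(∂₂φ₂) + μ̄₂ (∂₂φ₁ + ∂₁φ₂)² ] dx ≥ c_Ω ∫_Ω [ |φ|² + (∂₁φ₁)² + (∂₂φ₁)² + (∂₁φ₂)² ] dx. (This shows that on the space 𝕏 the bilinear form of the homogenized Gutiérrez tensor induces a norm equivalent to the natural norm of 𝕏.) -/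
open MeasureTheory

open Set

section Helpers

variable {u : (Fin 2 → ℝ) → ℝ}

lemma cont_dd (hu : ContDiff ℝ (⊤ : ℕ∞) u) (v : Fin 2 → ℝ) :
    Continuous fun x => fderiv ℝ u x v :=
  (hu.continuous_fderiv (by simp)).clm_apply continuous_const

lemma hcs_dd (h2 : HasCompactSupport u) (v : Fin 2 → ℝ) :
    HasCompactSupport fun x => fderiv ℝ u x v :=
  (h2.fderiv (𝕜 := ℝ)).comp_left (g := fun L : (Fin 2 → ℝ) →L[ℝ] ℝ => L v) rfl

lemma schwarz (hu : ContDiff ℝ (⊤ : ℕ∞) u) (v w x : Fin 2 → ℝ) :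
    fderiv ℝ (fun y => fderiv ℝ u y v) x w = fderiv ℝ (fun y => fderiv ℝ u y w) x v := by
  have hdu : Differentiable ℝ (fderiv ℝ u) := (hu.fderiv_right (m := 1) (by exact WithTop.coe_le_coe.2 le_top)).differentiable (by simp)
  have key : ∀ z t : Fin 2 → ℝ,
      fderiv ℝ (fun y => fderiv ℝ u y z) x t = fderiv ℝ (fderiv ℝ u) x t z := by
    intro z t
    have : (fun y => fderiv ℝ u y z)
        = (ContinuousLinearMap.apply ℝ ℝ z) ∘ (fderiv ℝ u) := rfl
    rw [this, fderiv_comp x (ContinuousLinearMap.differentiableAt _) (hdu x)]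
    simp
  rw [key, key]
  exact second_derivative_symmetric (fun y => (hu.differentiable (by simp) y).hasFDerivAt)
    (hdu x).hasFDerivAt w v

lemma poincare_1d {f f' : ℝ → ℝ} {R : ℝ} (hR : 0 < R)
    (hd : ∀ x, HasDerivAt f (f' x) x) (hc : Continuous f')
    (hsupp : ∀ x, R < |x| → f x = 0) :
    ∫ x, f x ^ 2 ≤ 16 * R ^ 2 * ∫ x, f' x ^ 2 := by
  have hfc : Continuous f := by
    apply continuous_iff_continuousAt.2 (fun x => (hd x).continuousAt)
  have hsupp' : ∀ x, R < |x| → f' x = 0 := by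
    intro x hx
    have hev : f =ᶠ[nhds x] (fun _ => (0 : ℝ)) := by
      have hopen : IsOpen {y : ℝ | R < |y|} := isOpen_lt continuous_const continuous_abs
      filter_upwards [hopen.mem_nhds hx] with y hy using hsupp y hy
    have h0 : HasDerivAt f 0 x := by
      rw [hev.hasDerivAt_iff]
      exact hasDerivAt_const x 0
    exact (hd x).unique h0
  have habs : ∀ x : ℝ, x ∉ Icc (-R) R → R < |x| := by
    intro x hx
    rcases not_and_or.1 hx with h | h
    · rw [abs_of_neg (by linarith [not_le.1 h])]; linarith [not_le.1 h]
    · rw [abs_of_pos (by linarith [not_le.1 h])]; exact not_le.1 h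
  have hcsf : HasCompactSupport f := by
    apply HasCompactSupport.intro (isCompact_Icc (a := -R) (b := R))
    intro x hx; exact hsupp x (habs x hx)
  have hcsf' : HasCompactSupport f' := by
    apply HasCompactSupport.intro (isCompact_Icc (a := -R) (b := R))
    intro x hx; exact hsupp' x (habs x hx)
  have hsq : ∀ {g : ℝ → ℝ}, HasCompactSupport g → HasCompactSupport fun x => g x ^ 2 := by
    intro g hg
    exact hg.comp_left (g := fun y : ℝ => y ^ 2) (by simp)
  have hif2 : Integrable (fun x => f x ^ 2) :=
    (hfc.pow 2).integrable_of_hasCompactSupport (hsq hcsf)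
  have hif'2 : Integrable (fun x => f' x ^ 2) :=
    (hc.pow 2).integrable_of_hasCompactSupport (hsq hcsf')
  set M : ℝ := ∫ x, (4 * R * f' x ^ 2 + (4 * R)⁻¹ * f x ^ 2) with hM
  have hiM : Integrable (fun x => 4 * R * f' x ^ 2 + (4 * R)⁻¹ * f x ^ 2) :=
    (hif'2.const_mul _).add (hif2.const_mul _)
  have hMnn : ∀ x : ℝ, 0 ≤ 4 * R * f' x ^ 2 + (4 * R)⁻¹ * f x ^ 2 := by
    intro x; positivity
  have hM0 : 0 ≤ M := integral_nonneg hMnn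
  have hptw : ∀ x : ℝ, 2 * f x * f' x ≤ 4 * R * f' x ^ 2 + (4 * R)⁻¹ * f x ^ 2 := by
    intro x
    have h4R : (4 : ℝ) * R ≠ 0 := by positivity
    have : 4 * R * f' x ^ 2 + (4 * R)⁻¹ * f x ^ 2 - 2 * f x * f' x
        = (4 * R)⁻¹ * (4 * R * f' x - f x) ^ 2 := by
      field_simp; ring
    nlinarith [mul_nonneg (inv_nonneg.2 (by positivity : (0:ℝ) ≤ 4 * R))
      (sq_nonneg (4 * R * f' x - f x))]
  have hkey : ∀ s : ℝ, f s ^ 2 ≤ M := by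
    intro s
    rcases lt_or_ge s (-R) with hs | hs
    · rw [hsupp s (by rw [abs_of_neg (by linarith)]; linarith)]
      simpa using hM0
    · have hFTC : ∫ x in (-(R+1))..s, (2 * f x * f' x)
          = f s ^ 2 - f (-(R+1)) ^ 2 := by
        apply intervalIntegral.integral_eq_sub_of_hasDerivAt
        · intro x _
          simpa [mul_comm, mul_assoc, mul_left_comm] using (hd x).fun_pow 2
        · exact (Continuous.intervalIntegrable (by continuity) _ _)
      have hzero : f (-(R+1)) = 0 := by
        apply hsupp; rw [abs_of_neg (by linarith)]; linarith
      rw [hzero] at hFTC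
      have hle : -(R+1) ≤ s := by linarith
      have h1 : f s ^ 2 = ∫ x in Ioc (-(R+1)) s, (2 * f x * f' x) := by
        rw [← intervalIntegral.integral_of_le hle, hFTC]; ring
      have h2 : (∫ x in Ioc (-(R+1)) s, (2 * f x * f' x))
          ≤ ∫ x in Ioc (-(R+1)) s, (4 * R * f' x ^ 2 + (4 * R)⁻¹ * f x ^ 2) := by
        apply setIntegral_mono_on
        · have hcsp : HasCompactSupport fun x => 2 * f x * f' x := by
            apply HasCompactSupport.intro (isCompact_Icc (a := -R) (b := R))
            intro x hx; rw [hsupp x (habs x hx)]; ring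
          exact ((by fun_prop : Continuous fun x => 2 * f x * f' x).integrable_of_hasCompactSupport
            hcsp).integrableOn
        · exact hiM.integrableOn
        · exact measurableSet_Ioc
        · intro x _; exact hptw x
      have h3 : (∫ x in Ioc (-(R+1)) s, (4 * R * f' x ^ 2 + (4 * R)⁻¹ * f x ^ 2)) ≤ M := by
        rw [hM]
        exact setIntegral_le_integral hiM (Filter.Eventually.of_forall hMnn)
      linarith [h1 ▸ le_trans h2 h3]
  have hrestrict : ∫ x, f x ^ 2 = ∫ x in Icc (-R) R, f x ^ 2 := by
    symm
    apply setIntegral_eq_integral_of_forall_compl_eq_zero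
    intro x hx
    rw [hsupp x (habs x hx)]; ring
  have hconst : ∫ x in Icc (-R) R, f x ^ 2 ≤ ∫ _x in Icc (-R) R, M := by
    apply setIntegral_mono_on hif2.integrableOn (integrableOn_const (by
      rw [Real.volume_Icc]; exact ENNReal.ofReal_ne_top)) measurableSet_Icc
    intro x _; exact hkey x
  have hconstval : ∫ _x in Icc (-R) R, M = 2 * R * M := by
    rw [setIntegral_const, measureReal_def, Real.volume_Icc, ENNReal.toReal_ofReal (by linarith), smul_eq_mul]
    ring
  have hMsplit : M = 4 * R * (∫ x, f' x ^ 2) + (4 * R)⁻¹ * ∫ x, f x ^ 2 := by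
    rw [hM, integral_add (hif'2.const_mul _) (hif2.const_mul _),
      integral_const_mul, integral_const_mul]
  have hhalf : 2 * R * ((4 * R)⁻¹) = 1 / 2 := by
    field_simp
    ring
  have htotal : ∫ x, f x ^ 2 ≤ 8 * R ^ 2 * (∫ x, f' x ^ 2) + 1 / 2 * ∫ x, f x ^ 2 := by
    calc ∫ x, f x ^ 2 = ∫ x in Icc (-R) R, f x ^ 2 := hrestrict
      _ ≤ 2 * R * M := le_trans hconst (le_of_eq hconstval)
      _ = 8 * R ^ 2 * (∫ x, f' x ^ 2) + 2 * R * ((4 * R)⁻¹) * ∫ x, f x ^ 2 := by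
          rw [hMsplit]; ring
      _ = 8 * R ^ 2 * (∫ x, f' x ^ 2) + 1 / 2 * ∫ x, f x ^ 2 := by rw [hhalf]
  linarith

lemma poincare_prod {f : ℝ × ℝ → ℝ} (hf : ContDiff ℝ (⊤ : ℕ∞) f) (h2f : HasCompactSupport f)
    {R : ℝ} (hR : 0 < R) (hsub : tsupport f ⊆ Metric.closedBall 0 R) :
    ∫ p, f p ^ 2 ≤ 16 * R ^ 2 * ∫ p, (fderiv ℝ f p (1, 0)) ^ 2 := by
  have hvanish : ∀ p : ℝ × ℝ, R < ‖p‖ → f p = 0 := by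
    intro p hp
    apply image_eq_zero_of_notMem_tsupport
    intro hmem
    exact absurd (hsub hmem) (by simpa [Metric.mem_closedBall] using not_le.2 hp)
  have hD1c : Continuous fun p : ℝ × ℝ => fderiv ℝ f p (1, 0) :=
    (hf.continuous_fderiv (by simp)).clm_apply continuous_const
  have hD1cs : HasCompactSupport fun p : ℝ × ℝ => fderiv ℝ f p (1, 0) :=
    (h2f.fderiv (𝕜 := ℝ)).comp_left (g := fun L : ℝ × ℝ →L[ℝ] ℝ => L (1, 0)) rfl
  have hF2 : Integrable (fun p : ℝ × ℝ => f p ^ 2) :=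
    (hf.continuous.fun_pow 2).integrable_of_hasCompactSupport
      (h2f.comp_left (g := fun y : ℝ => y ^ 2) (by simp))
  have hG2 : Integrable (fun p : ℝ × ℝ => (fderiv ℝ f p (1, 0)) ^ 2) :=
    (hD1c.fun_pow 2).integrable_of_hasCompactSupport
      (hD1cs.comp_left (g := fun y : ℝ => y ^ 2) (by simp))
  have hslice : ∀ y x : ℝ, HasDerivAt (fun s => f (s, y)) (fderiv ℝ f (x, y) (1, 0)) x := by
    intro y x
    have h1 : HasDerivAt (fun s : ℝ => (s, y)) ((1 : ℝ), (0 : ℝ)) x :=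
      (hasDerivAt_id x).prodMk (hasDerivAt_const x y)
    exact ((hf.differentiable (by simp) (x, y)).hasFDerivAt.comp_hasDerivAt x h1)
  have hinner : ∀ y : ℝ, ∫ x, f (x, y) ^ 2
      ≤ 16 * R ^ 2 * ∫ x, (fderiv ℝ f (x, y) (1, 0)) ^ 2 := by
    intro y
    apply poincare_1d hR (hslice y)
    · exact hD1c.comp (continuous_id.prodMk continuous_const)
    · intro x hx
      apply hvanish
      calc R < |x| := hx
        _ ≤ ‖(x, y)‖ := by rw [Prod.norm_def]; exact le_max_left _ _
  have hF2' : Integrable (fun p : ℝ × ℝ => f p ^ 2) (volume.prod volume) := by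
    rwa [← Measure.volume_eq_prod]
  have hG2' : Integrable (fun p : ℝ × ℝ => (fderiv ℝ f p (1, 0)) ^ 2) (volume.prod volume) := by
    rwa [← Measure.volume_eq_prod]
  calc ∫ p, f p ^ 2 = ∫ y, ∫ x, f (x, y) ^ 2 := by
        rw [Measure.volume_eq_prod ℝ ℝ]; exact integral_prod_symm _ hF2'
    _ ≤ ∫ y, 16 * R ^ 2 * ∫ x, (fderiv ℝ f (x, y) (1, 0)) ^ 2 := by
        apply integral_mono hF2'.integral_prod_right
          (hG2'.integral_prod_right.const_mul _) hinner
    _ = 16 * R ^ 2 * ∫ p, (fderiv ℝ f p (1, 0)) ^ 2 := by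
        rw [integral_const_mul, Measure.volume_eq_prod ℝ ℝ]
        rw [integral_prod_symm _ hG2']

noncomputable def eq2 : (Fin 2 → ℝ) ≃L[ℝ] ℝ × ℝ := ContinuousLinearEquiv.finTwoArrow ℝ ℝ

lemma eq2_coe : ⇑eq2.symm = ⇑(MeasurableEquiv.finTwoArrow (α := ℝ)).symm := by
  funext p
  rfl

lemma eq2_single0 : eq2.symm ((1 : ℝ), (0 : ℝ)) = Pi.single 0 1 := by
  funext i
  fin_cases i <;> rfl

lemma eq2_apply0 (p : ℝ × ℝ) : eq2.symm p 0 = p.1 := rfl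
lemma eq2_apply1 (p : ℝ × ℝ) : eq2.symm p 1 = p.2 := rfl

lemma integral_transport (v : (Fin 2 → ℝ) → ℝ) :
    ∫ p : ℝ × ℝ, v (eq2.symm p) = ∫ x, v x := by
  have h := (volume_preserving_finTwoArrow ℝ).symm (MeasurableEquiv.finTwoArrow (α := ℝ))
  have := h.integral_comp (MeasurableEquiv.measurableEmbedding _) v
  rw [← this]
  simp only [eq2_coe]

lemma poincare_fin (hu : ContDiff ℝ (⊤ : ℕ∞) u) (h2u : HasCompactSupport u)
    {R : ℝ} (hR : 0 < R) (hsub : tsupport u ⊆ Metric.closedBall 0 R) :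
    ∫ x, u x ^ 2 ≤ 16 * R ^ 2 * ∫ x, (fderiv ℝ u x (Pi.single 0 1)) ^ 2 := by
  set f : ℝ × ℝ → ℝ := u ∘ eq2.symm with hfdef
  have hf : ContDiff ℝ (⊤ : ℕ∞) f := hu.comp eq2.symm.contDiff
  have h2f : HasCompactSupport f := h2u.comp_homeomorph eq2.symm.toHomeomorph
  have hsubf : tsupport f ⊆ Metric.closedBall 0 R := by
    intro p hp
    have hts : tsupport f = eq2.symm ⁻¹' tsupport u := by
      rw [hfdef]
      unfold tsupport
      rw [Function.support_comp_eq_preimage]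
      exact (Homeomorph.preimage_closure eq2.symm.toHomeomorph (Function.support u)).symm
    rw [hts] at hp
    have hnorm : ‖eq2.symm p‖ ≤ R := by simpa [Metric.mem_closedBall] using hsub hp
    rw [Metric.mem_closedBall, dist_zero_right, Prod.norm_def]
    apply max_le
    · rw [← eq2_apply0 p]
      exact le_trans (norm_le_pi_norm (eq2.symm p) 0) hnorm
    · rw [← eq2_apply1 p]
      exact le_trans (norm_le_pi_norm (eq2.symm p) 1) hnorm
  have hderiv : ∀ p : ℝ × ℝ, fderiv ℝ f p ((1 : ℝ), (0 : ℝ))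
      = fderiv ℝ u (eq2.symm p) (Pi.single 0 1) := by
    intro p
    rw [hfdef]
    have := eq2.symm.comp_right_fderiv (f := u) (x := p)
    rw [this]
    simp [eq2_single0]
  have h1 := poincare_prod hf h2f hR hsubf
  have e1 : ∫ p : ℝ × ℝ, f p ^ 2 = ∫ x, u x ^ 2 := integral_transport fun x => u x ^ 2
  have e2 : ∫ p : ℝ × ℝ, (fderiv ℝ f p ((1 : ℝ), (0 : ℝ))) ^ 2
      = ∫ x, (fderiv ℝ u x (Pi.single 0 1)) ^ 2 := by
    rw [show (fun p : ℝ × ℝ => (fderiv ℝ f p ((1 : ℝ), (0 : ℝ))) ^ 2)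
        = fun p => ((fun x => (fderiv ℝ u x (Pi.single 0 1)) ^ 2) (eq2.symm p)) from
      funext fun p => by rw [hderiv p]]
    exact integral_transport fun x => (fderiv ℝ u x (Pi.single 0 1)) ^ 2
  rw [e1, e2] at h1
  exact h1

end Helpers


set_option maxHeartbeats 1000000

/-- Coercivity of the homogenized Gutiérrez quadratic form on a bounded open set,
including the zeroth-order term (norm equivalence on the space `𝕏`). -/
theorem stmt10 (lb mb1 mb2 : ℝ)
    (hlb : lb < 0) (h1 : 0 < lb + 2 * mb1) (h2 : 0 < mb2) (h3 : 0 < lb + 2 * mb2)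
    (Ω : Set (Fin 2 → ℝ)) (hΩo : IsOpen Ω) (hΩb : Bornology.IsBounded Ω) :
    ∃ c : ℝ, 0 < c ∧
      ∀ φ : (Fin 2 → ℝ) → (Fin 2 → ℝ), ContDiff ℝ (⊤ : ℕ∞) φ → HasCompactSupport φ →
        tsupport φ ⊆ Ω →
        c * ∫ x in Ω,
              ((φ x 0) ^ 2 + (φ x 1) ^ 2
                + (pd φ 0 0 x) ^ 2 + (pd φ 1 0 x) ^ 2 + (pd φ 0 1 x) ^ 2)
          ≤ ∫ x in Ω,
              ((lb + 2 * mb1) * (pd φ 0 0 x) ^ 2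
                + 2 * lb * (pd φ 0 0 x) * (pd φ 1 1 x)
                + mb2 * (pd φ 1 0 x + pd φ 0 1 x) ^ 2) := by
  obtain ⟨R, hR, hΩR⟩ := hΩb.subset_closedBall_lt 0 0
  set ε : ℝ := mb2 - |lb + mb2| with hεdef
  have hε : 0 < ε := by
    have : |lb + mb2| < mb2 := abs_lt.2 ⟨by linarith, by linarith⟩
    linarith
  have hK : (0 : ℝ) < 16 * R ^ 2 + 1 := by positivity
  refine ⟨min (lb + 2 * mb1) ε / (16 * R ^ 2 + 1), by positivity, ?_⟩
  intro φ hφ h2φ hsubΩ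
  have hsubB : tsupport φ ⊆ Metric.closedBall 0 R := hsubΩ.trans hΩR
  -- scalar components
  set u0 : (Fin 2 → ℝ) → ℝ := fun x => φ x 0 with hu0def
  set u1 : (Fin 2 → ℝ) → ℝ := fun x => φ x 1 with hu1def
  have hu0 : ContDiff ℝ (⊤ : ℕ∞) u0 := contDiff_pi.1 hφ 0
  have hu1 : ContDiff ℝ (⊤ : ℕ∞) u1 := contDiff_pi.1 hφ 1
  have h2u0 : HasCompactSupport u0 := h2φ.comp_left (g := fun v : Fin 2 → ℝ => v 0) rfl
  have h2u1 : HasCompactSupport u1 := h2φ.comp_left (g := fun v : Fin 2 → ℝ => v 1) rfl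
  -- pd via scalar fderiv
  have pd_eq : ∀ (i j : Fin 2) (x : Fin 2 → ℝ),
      pd φ i j x = fderiv ℝ (fun y => φ y j) x (Pi.single i 1) := by
    intro i j x
    have hcomp : (fun y => φ y j) = (ContinuousLinearMap.proj (R := ℝ) (φ := fun _ : Fin 2 => ℝ) j) ∘ φ := rfl
    rw [hcomp, fderiv_comp x (ContinuousLinearMap.differentiableAt _)
      (hφ.differentiable (by simp) x), ContinuousLinearMap.fderiv]
    rfl
  -- continuity / support of pd
  have hcont_pd : ∀ i j, Continuous (pd φ i j) := by
    intro i j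
    have : pd φ i j = fun x => fderiv ℝ (fun y => φ y j) x (Pi.single i 1) :=
      funext fun x => pd_eq i j x
    rw [this]
    exact cont_dd (contDiff_pi.1 hφ j) _
  have hcs_pd : ∀ i j, HasCompactSupport (pd φ i j) := by
    intro i j
    have : pd φ i j = fun x => fderiv ℝ (fun y => φ y j) x (Pi.single i 1) :=
      funext fun x => pd_eq i j x
    rw [this]
    exact hcs_dd (h2φ.comp_left (g := fun v : Fin 2 → ℝ => v j) rfl) _
  -- integrability helper
  have hint : ∀ {g : (Fin 2 → ℝ) → ℝ}, Continuous g → HasCompactSupport g → Integrable g :=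
    fun hc hcs => hc.integrable_of_hasCompactSupport hcs
  have hsq : ∀ {g : (Fin 2 → ℝ) → ℝ}, HasCompactSupport g →
      HasCompactSupport fun x => g x ^ 2 :=
    fun hg => hg.comp_left (g := fun y : ℝ => y ^ 2) (by simp)
  -- names for the four derivative entries
  have hconta := hcont_pd 0 0
  have hcontb := hcont_pd 1 0
  have hcontc := hcont_pd 0 1
  have hcontd := hcont_pd 1 1
  have hcsa := hcs_pd 0 0
  have hcsb := hcs_pd 1 0
  have hcsc := hcs_pd 0 1
  have hcsd := hcs_pd 1 1
  -- integrable squares and products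
  have ia2 : Integrable fun x => pd φ 0 0 x ^ 2 := hint (hconta.pow 2) (hsq hcsa)
  have ib2 : Integrable fun x => pd φ 1 0 x ^ 2 := hint (hcontb.pow 2) (hsq hcsb)
  have ic2 : Integrable fun x => pd φ 0 1 x ^ 2 := hint (hcontc.pow 2) (hsq hcsc)
  have iu02 : Integrable fun x => u0 x ^ 2 := hint (hu0.continuous.pow 2) (hsq h2u0)
  have iu12 : Integrable fun x => u1 x ^ 2 := hint (hu1.continuous.pow 2) (hsq h2u1)
  have ibc : Integrable fun x => pd φ 1 0 x * pd φ 0 1 x :=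
    hint (hcontb.mul hcontc) (hcsb.mul_right)
  have iad : Integrable fun x => pd φ 0 0 x * pd φ 1 1 x :=
    hint (hconta.mul hcontd) (hcsa.mul_right)
  have isum : Integrable fun x => (pd φ 1 0 x + pd φ 0 1 x) ^ 2 :=
    hint ((hcontb.add hcontc).pow 2) (hsq (hcsb.add hcsc))
  -- set integrals over Ω are integrals over the whole space
  have hvanφ : ∀ x, x ∉ Ω → φ x = 0 := fun x hx =>
    image_eq_zero_of_notMem_tsupport fun hmem => hx (hsubΩ hmem)
  have hvanpd : ∀ i j x, x ∉ Ω → pd φ i j x = 0 := by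
    intro i j x hx
    have hx' : x ∉ tsupport φ := fun hmem => hx (hsubΩ hmem)
    have : fderiv ℝ φ x = 0 := by
      by_contra h
      exact hx' (support_fderiv_subset ℝ (Function.mem_support.2 h))
    unfold pd
    rw [this]
    rfl
  rw [setIntegral_eq_integral_of_forall_compl_eq_zero (f := fun x =>
      ((φ x 0) ^ 2 + (φ x 1) ^ 2 + (pd φ 0 0 x) ^ 2 + (pd φ 1 0 x) ^ 2 + (pd φ 0 1 x) ^ 2))
      (fun x hx => by
        simp only [hvanφ x hx, hvanpd 0 0 x hx, hvanpd 1 0 x hx, hvanpd 0 1 x hx,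
          Pi.zero_apply]
        ring),
    setIntegral_eq_integral_of_forall_compl_eq_zero (f := fun x =>
      ((lb + 2 * mb1) * (pd φ 0 0 x) ^ 2 + 2 * lb * (pd φ 0 0 x) * (pd φ 1 1 x)
        + mb2 * (pd φ 1 0 x + pd φ 0 1 x) ^ 2))
      (fun x hx => by
        simp only [hvanpd 0 0 x hx, hvanpd 1 0 x hx, hvanpd 0 1 x hx, hvanpd 1 1 x hx]
        ring)]
  -- abbreviations
  set s0 : Fin 2 → ℝ := Pi.single 0 1 with hs0
  set s1 : Fin 2 → ℝ := Pi.single 1 1 with hs1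
  set dfun : (Fin 2 → ℝ) → ℝ := fun x => fderiv ℝ u1 x s1 with hdfun
  set cfun : (Fin 2 → ℝ) → ℝ := fun x => fderiv ℝ u1 x s0 with hcfun
  have hd_eq : ∀ x, pd φ 1 1 x = dfun x := fun x => pd_eq 1 1 x
  have hc_eq : ∀ x, pd φ 0 1 x = cfun x := fun x => pd_eq 0 1 x
  have ha_eq : ∀ x, pd φ 0 0 x = fderiv ℝ u0 x s0 := fun x => pd_eq 0 0 x
  have hb_eq : ∀ x, pd φ 1 0 x = fderiv ℝ u0 x s1 := fun x => pd_eq 1 0 x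
  have sd : ContDiff ℝ (⊤ : ℕ∞) dfun := (hu1.fderiv_right (by simp)).clm_apply contDiff_const
  have sc : ContDiff ℝ (⊤ : ℕ∞) cfun := (hu1.fderiv_right (by simp)).clm_apply contDiff_const
  have csd : HasCompactSupport dfun := hcs_dd h2u1 s1
  have csc : HasCompactSupport cfun := hcs_dd h2u1 s0
  have cs_dd0 : HasCompactSupport fun x => fderiv ℝ dfun x s0 := hcs_dd csd s0
  have cs_cc1 : HasCompactSupport fun x => fderiv ℝ cfun x s1 := hcs_dd csc s1
  -- integration by parts, twice
  have ibp1 : ∫ x, dfun x * fderiv ℝ u0 x s0 = - ∫ x, fderiv ℝ dfun x s0 * u0 x := by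
    apply integral_mul_fderiv_eq_neg_fderiv_mul_of_integrable
    · exact hint ((cont_dd sd s0).mul hu0.continuous) (cs_dd0.mul_right)
    · exact hint (sd.continuous.mul (cont_dd hu0 s0)) (csd.mul_right)
    · exact hint (sd.continuous.mul hu0.continuous) (csd.mul_right)
    · exact fun x _ => sd.differentiable (by simp) x
    · exact fun x _ => hu0.differentiable (by simp) x
  have ibp2 : ∫ x, cfun x * fderiv ℝ u0 x s1 = - ∫ x, fderiv ℝ cfun x s1 * u0 x := by
    apply integral_mul_fderiv_eq_neg_fderiv_mul_of_integrable
    · exact hint ((cont_dd sc s1).mul hu0.continuous) (cs_cc1.mul_right)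
    · exact hint (sc.continuous.mul (cont_dd hu0 s1)) (csc.mul_right)
    · exact hint (sc.continuous.mul hu0.continuous) (csc.mul_right)
    · exact fun x _ => sc.differentiable (by simp) x
    · exact fun x _ => hu0.differentiable (by simp) x
  have hschwarz : ∀ x, fderiv ℝ dfun x s0 = fderiv ℝ cfun x s1 := fun x => schwarz hu1 s1 s0 x
  have h_ibp : (∫ x, pd φ 0 0 x * pd φ 1 1 x) = ∫ x, pd φ 1 0 x * pd φ 0 1 x := by
    calc (∫ x, pd φ 0 0 x * pd φ 1 1 x) = ∫ x, dfun x * fderiv ℝ u0 x s0 := by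
          congr 1; funext x; rw [ha_eq x, hd_eq x]; ring
      _ = - ∫ x, fderiv ℝ dfun x s0 * u0 x := ibp1
      _ = - ∫ x, fderiv ℝ cfun x s1 * u0 x := by
          have heq : (fun x => fderiv ℝ dfun x s0 * u0 x)
              = fun x => fderiv ℝ cfun x s1 * u0 x := funext fun x => by rw [hschwarz x]
          rw [heq]
      _ = ∫ x, cfun x * fderiv ℝ u0 x s1 := ibp2.symm
      _ = ∫ x, pd φ 1 0 x * pd φ 0 1 x := by
          congr 1; funext x; rw [hb_eq x, hc_eq x]; ring
  -- split the right-hand side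
  have hsplitR : (∫ x, ((lb + 2 * mb1) * pd φ 0 0 x ^ 2
        + 2 * lb * pd φ 0 0 x * pd φ 1 1 x + mb2 * (pd φ 1 0 x + pd φ 0 1 x) ^ 2))
      = (lb + 2 * mb1) * (∫ x, pd φ 0 0 x ^ 2)
        + 2 * lb * (∫ x, pd φ 0 0 x * pd φ 1 1 x)
        + mb2 * (∫ x, (pd φ 1 0 x + pd φ 0 1 x) ^ 2) := by
    rw [show (fun x => (lb + 2 * mb1) * pd φ 0 0 x ^ 2
        + 2 * lb * pd φ 0 0 x * pd φ 1 1 x + mb2 * (pd φ 1 0 x + pd φ 0 1 x) ^ 2)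
        = fun x => (lb + 2 * mb1) * (pd φ 0 0 x ^ 2)
          + ((2 * lb) * (pd φ 0 0 x * pd φ 1 1 x)
            + mb2 * ((pd φ 1 0 x + pd φ 0 1 x) ^ 2)) from funext fun x => by ring]
    have j1 : Integrable (fun x => (lb + 2 * mb1) * (pd φ 0 0 x ^ 2)) volume :=
      ia2.const_mul _
    have j2 : Integrable (fun x => (2 * lb) * (pd φ 0 0 x * pd φ 1 1 x)) volume :=
      iad.const_mul _
    have j3 : Integrable (fun x => mb2 * ((pd φ 1 0 x + pd φ 0 1 x) ^ 2)) volume :=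
      isum.const_mul _
    have j23 : Integrable (fun x => (2 * lb) * (pd φ 0 0 x * pd φ 1 1 x)
        + mb2 * ((pd φ 1 0 x + pd φ 0 1 x) ^ 2)) volume := j2.add j3
    rw [integral_add j1 j23, integral_add j2 j3,
      integral_const_mul, integral_const_mul, integral_const_mul]
    ring
  -- split the left-hand side
  have hsplitL : (∫ x, (φ x 0 ^ 2 + φ x 1 ^ 2 + pd φ 0 0 x ^ 2
        + pd φ 1 0 x ^ 2 + pd φ 0 1 x ^ 2))
      = (∫ x, u0 x ^ 2) + (∫ x, u1 x ^ 2) + (∫ x, pd φ 0 0 x ^ 2)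
        + (∫ x, pd φ 1 0 x ^ 2) + (∫ x, pd φ 0 1 x ^ 2) := by
    rw [show (fun x => φ x 0 ^ 2 + φ x 1 ^ 2 + pd φ 0 0 x ^ 2
        + pd φ 1 0 x ^ 2 + pd φ 0 1 x ^ 2)
        = fun x => u0 x ^ 2 + (u1 x ^ 2 + (pd φ 0 0 x ^ 2
          + (pd φ 1 0 x ^ 2 + pd φ 0 1 x ^ 2))) from funext fun x => by
        simp only [hu0def, hu1def]; ring]
    have k4 : Integrable (fun x => pd φ 1 0 x ^ 2 + pd φ 0 1 x ^ 2) volume := ib2.add ic2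
    have k3 : Integrable (fun x => pd φ 0 0 x ^ 2 + (pd φ 1 0 x ^ 2 + pd φ 0 1 x ^ 2)) volume :=
      ia2.add k4
    have k2 : Integrable (fun x => u1 x ^ 2
        + (pd φ 0 0 x ^ 2 + (pd φ 1 0 x ^ 2 + pd φ 0 1 x ^ 2))) volume := iu12.add k3
    rw [integral_add iu02 k2, integral_add iu12 k3, integral_add ia2 k4, integral_add ib2 ic2]
    ring
  -- quadratic form estimate
  have hquad : ε * (∫ x, pd φ 1 0 x ^ 2) + ε * (∫ x, pd φ 0 1 x ^ 2)
      ≤ 2 * lb * (∫ x, pd φ 1 0 x * pd φ 0 1 x)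
        + mb2 * (∫ x, (pd φ 1 0 x + pd φ 0 1 x) ^ 2) := by
    have hptw : ∀ x, ε * pd φ 1 0 x ^ 2 + ε * pd φ 0 1 x ^ 2
        ≤ (2 * lb) * (pd φ 1 0 x * pd φ 0 1 x) + mb2 * (pd φ 1 0 x + pd φ 0 1 x) ^ 2 := by
      intro x
      rw [hεdef]
      rcases abs_cases (lb + mb2) with ⟨he, hsgn⟩ | ⟨he, hsgn⟩ <;> rw [he]
      · nlinarith [mul_nonneg hsgn (sq_nonneg (pd φ 1 0 x + pd φ 0 1 x))]
      · nlinarith [mul_nonneg (neg_nonneg.2 (le_of_lt hsgn))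
          (sq_nonneg (pd φ 1 0 x - pd φ 0 1 x))]
    have l1 : Integrable (fun x => ε * (pd φ 1 0 x ^ 2)) volume := ib2.const_mul _
    have l2 : Integrable (fun x => ε * (pd φ 0 1 x ^ 2)) volume := ic2.const_mul _
    have l3 : Integrable (fun x => (2 * lb) * (pd φ 1 0 x * pd φ 0 1 x)) volume :=
      ibc.const_mul _
    have l4 : Integrable (fun x => mb2 * ((pd φ 1 0 x + pd φ 0 1 x) ^ 2)) volume :=
      isum.const_mul _
    have hmono := integral_mono (μ := volume)
      (f := fun x => ε * (pd φ 1 0 x ^ 2) + ε * (pd φ 0 1 x ^ 2))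
      (g := fun x => (2 * lb) * (pd φ 1 0 x * pd φ 0 1 x)
        + mb2 * ((pd φ 1 0 x + pd φ 0 1 x) ^ 2))
      (l1.add l2) (l3.add l4) (fun x => hptw x)
    rw [integral_add l1 l2, integral_add l3 l4,
      integral_const_mul, integral_const_mul, integral_const_mul, integral_const_mul] at hmono
    linarith
  -- Poincaré inequalities
  have hsub0 : tsupport u0 ⊆ Metric.closedBall 0 R := by
    refine subset_trans (closure_mono ?_) hsubB
    intro x hx
    simp only [Function.mem_support] at hx ⊢
    intro h0
    exact hx (by rw [hu0def]; simp [h0])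
  have hsub1 : tsupport u1 ⊆ Metric.closedBall 0 R := by
    refine subset_trans (closure_mono ?_) hsubB
    intro x hx
    simp only [Function.mem_support] at hx ⊢
    intro h0
    exact hx (by rw [hu1def]; simp [h0])
  have hP0 : (∫ x, u0 x ^ 2) ≤ 16 * R ^ 2 * ∫ x, pd φ 0 0 x ^ 2 := by
    have := poincare_fin hu0 h2u0 hR hsub0
    rwa [show (∫ x, (fderiv ℝ u0 x (Pi.single 0 1)) ^ 2) = ∫ x, pd φ 0 0 x ^ 2 from by
      congr 1; funext x; rw [ha_eq x]] at this
  have hP1 : (∫ x, u1 x ^ 2) ≤ 16 * R ^ 2 * ∫ x, pd φ 0 1 x ^ 2 := by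
    have := poincare_fin hu1 h2u1 hR hsub1
    rwa [show (∫ x, (fderiv ℝ u1 x (Pi.single 0 1)) ^ 2) = ∫ x, pd φ 0 1 x ^ 2 from by
      congr 1; funext x; rw [hc_eq x]] at this
  -- final arithmetic
  rw [hsplitL, hsplitR]
  set A := ∫ x, pd φ 0 0 x ^ 2
  set B := ∫ x, pd φ 1 0 x ^ 2
  set C := ∫ x, pd φ 0 1 x ^ 2
  set P0 := ∫ x, u0 x ^ 2
  set P1 := ∫ x, u1 x ^ 2
  have hA : 0 ≤ A := integral_nonneg fun x => sq_nonneg _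
  have hB : 0 ≤ B := integral_nonneg fun x => sq_nonneg _
  have hC : 0 ≤ C := integral_nonneg fun x => sq_nonneg _
  set m := min (lb + 2 * mb1) ε with hm
  have hm0 : 0 ≤ m := le_min (le_of_lt h1) (le_of_lt hε)
  have hm1 : m ≤ lb + 2 * mb1 := min_le_left _ _
  have hm2 : m ≤ ε := min_le_right _ _
  have hS5 : P0 + P1 + A + B + C ≤ (16 * R ^ 2 + 1) * (A + B + C) := by
    have hRB : 0 ≤ 16 * R ^ 2 * B := by positivity
    nlinarith [hP0, hP1, hA, hB, hC]
  have hstep1 : m / (16 * R ^ 2 + 1) * (P0 + P1 + A + B + C) ≤ m * (A + B + C) := by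
    have h5nn : 0 ≤ m / (16 * R ^ 2 + 1) := by positivity
    calc m / (16 * R ^ 2 + 1) * (P0 + P1 + A + B + C)
        ≤ m / (16 * R ^ 2 + 1) * ((16 * R ^ 2 + 1) * (A + B + C)) :=
          mul_le_mul_of_nonneg_left hS5 h5nn
      _ = m * (A + B + C) := by
          field_simp
  have hstep2 : m * (A + B + C) ≤ (lb + 2 * mb1) * A + ε * B + ε * C := by
    nlinarith [mul_le_mul_of_nonneg_right hm1 hA, mul_le_mul_of_nonneg_right hm2 hB,
      mul_le_mul_of_nonneg_right hm2 hC]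
  calc m / (16 * R ^ 2 + 1) * (P0 + P1 + A + B + C) ≤ m * (A + B + C) := hstep1
    _ ≤ (lb + 2 * mb1) * A + ε * B + ε * C := hstep2
    _ ≤ (lb + 2 * mb1) * A + 2 * lb * (∫ x, pd φ 0 0 x * pd φ 1 1 x)
        + mb2 * (∫ x, (pd φ 1 0 x + pd φ 0 1 x) ^ 2) := by
        rw [h_ibp]
        linarith [hquad]
end

section
/- Let θ ∈ (0,1) and let M be a 2×2 real matrix. The following are equivalent: (i) there exists ξ ∈ ℝ² such that the matrix (M + (1−θ) ξ⊗e₁)R⊥ is Frobenius-orthogonal to both G and H, and the matrix (M − θ ξ⊗e₁)R⊥ is Frobenius-orthogonal to I₂; (ii) (2θ−1)M₁₂ + M₂₁ = 0. Moreover, when these hold the vector ξ is unique, and the set of matrices MR⊥ for M satisfying (ii) is exactly { N ∈ ℝ^{2×2} : N₂₂ = (2θ−1)N₁₁ }; in particular when θ = 1/2 it is exactly the set of matrices with vanishing (2,2)-entry. -/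
open Matrix

/-- Frobenius inner product `A·B := tr(Aᵀ B)` on 2×2 real matrices. -/
noncomputable def frob (A B : Matrix (Fin 2) (Fin 2) ℝ) : ℝ := (Aᵀ * B).trace

/-- The π/2-rotation matrix. -/
def Rperp : Matrix (Fin 2) (Fin 2) ℝ := !![0, -1; 1, 0]

def Gmat : Matrix (Fin 2) (Fin 2) ℝ := !![1, 0; 0, -1]

def Hmat : Matrix (Fin 2) (Fin 2) ℝ := !![0, 1; 1, 0]

/-- Condition (i): the oscillating laminate gradient field built from `M` and the
lamination vector `ξ` lies pointwise in the range of the augmented tensor `K`: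
`(M + (1−θ) ξ⊗e₁)R⊥ ⟂ G, H` (phase 1) and `(M − θ ξ⊗e₁)R⊥ ⟂ I₂` (phase 2). -/
noncomputable def laminateCompatible (θ : ℝ) (M : Matrix (Fin 2) (Fin 2) ℝ)
    (ξ : Fin 2 → ℝ) : Prop :=
  frob ((M + (1 - θ) • vecMulVec ξ ![1, 0]) * Rperp) Gmat = 0 ∧
  frob ((M + (1 - θ) • vecMulVec ξ ![1, 0]) * Rperp) Hmat = 0 ∧
  frob ((M - θ • vecMulVec ξ ![1, 0]) * Rperp) (1 : Matrix (Fin 2) (Fin 2) ℝ) = 0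

lemma lamChar (θ : ℝ) (M : Matrix (Fin 2) (Fin 2) ℝ) (ξ : Fin 2 → ℝ) :
    laminateCompatible θ M ξ ↔
      (M 0 1 + M 1 0 + (1 - θ) * ξ 1 = 0 ∧ M 1 1 - M 0 0 - (1 - θ) * ξ 0 = 0 ∧
       M 0 1 - M 1 0 + θ * ξ 1 = 0) := by
  simp [laminateCompatible, frob, Rperp, Gmat, Hmat, vecMulVec, Matrix.trace,
    Matrix.mul_apply, Fin.sum_univ_succ, Matrix.one_apply]
  constructor <;> rintro ⟨h1, h2, h3⟩ <;> refine ⟨by linarith, by linarith, by linarith⟩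

lemma setEq (θ : ℝ) :
    { N : Matrix (Fin 2) (Fin 2) ℝ | ∃ M' : Matrix (Fin 2) (Fin 2) ℝ,
        (2 * θ - 1) * M' 0 1 + M' 1 0 = 0 ∧ N = M' * Rperp }
      = { N : Matrix (Fin 2) (Fin 2) ℝ | N 1 1 = (2 * θ - 1) * N 0 0 } := by
  ext N
  simp only [Set.mem_setOf_eq]
  constructor
  · rintro ⟨M', hM', rfl⟩
    simp [Rperp, Matrix.mul_apply, Fin.sum_univ_succ]
    linarith
  · intro hN
    refine ⟨!![-N 0 1, N 0 0; -N 1 1, N 1 0], by simp; linarith, ?_⟩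
    ext i j
    fin_cases i <;> fin_cases j <;>
      simp [Rperp, Matrix.mul_apply, Fin.sum_univ_succ]

theorem stmt15 (θ : ℝ) (hθ : θ ∈ Set.Ioo (0 : ℝ) 1) (M : Matrix (Fin 2) (Fin 2) ℝ) :
    ((∃ ξ : Fin 2 → ℝ, laminateCompatible θ M ξ)
      ↔ (2 * θ - 1) * M 0 1 + M 1 0 = 0) ∧
    ((2 * θ - 1) * M 0 1 + M 1 0 = 0 → ∃! ξ : Fin 2 → ℝ, laminateCompatible θ M ξ) ∧
    { N : Matrix (Fin 2) (Fin 2) ℝ | ∃ M' : Matrix (Fin 2) (Fin 2) ℝ,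
        (2 * θ - 1) * M' 0 1 + M' 1 0 = 0 ∧ N = M' * Rperp }
      = { N : Matrix (Fin 2) (Fin 2) ℝ | N 1 1 = (2 * θ - 1) * N 0 0 } ∧
    (θ = 1 / 2 →
      { N : Matrix (Fin 2) (Fin 2) ℝ | ∃ M' : Matrix (Fin 2) (Fin 2) ℝ,
          (2 * θ - 1) * M' 0 1 + M' 1 0 = 0 ∧ N = M' * Rperp }
        = { N : Matrix (Fin 2) (Fin 2) ℝ | N 1 1 = 0 }) := by
  obtain ⟨hθ0, hθ1⟩ := hθ
  have hθn : θ ≠ 0 := ne_of_gt hθ0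
  have h1θ : (1 : ℝ) - θ ≠ 0 := by linarith
  have key : (2 * θ - 1) * M 0 1 + M 1 0 = 0 → ∃! ξ : Fin 2 → ℝ, laminateCompatible θ M ξ := by
    intro h
    refine ⟨![(M 1 1 - M 0 0) / (1 - θ), (M 1 0 - M 0 1) / θ], ?_, ?_⟩
    · show laminateCompatible θ M _
      rw [lamChar]
      refine ⟨?_, ?_, ?_⟩ <;> simp <;> field_simp <;> ring_nf <;> nlinarith [h]
    · intro ξ' hξ'
      rw [lamChar] at hξ'
      obtain ⟨e1, e2, e3⟩ := hξ'
      funext i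
      fin_cases i <;> simp <;> field_simp <;> linarith
  refine ⟨⟨?_, fun h => (key h).exists⟩, key, setEq θ, ?_⟩
  · rintro ⟨ξ, hξ⟩
    rw [lamChar] at hξ
    obtain ⟨h1, h2, h3⟩ := hξ
    linear_combination θ * h1 - (1 - θ) * h3
  · intro hhalf
    rw [setEq θ, hhalf]
    norm_num
end

section
/- Let λ₁, μ₁, λ₂, μ₂ ∈ ℝ satisfy the Gutiérrez conditions 0 < −λ₂−μ₂ = μ₁ < μ₂ and λ₁+μ₁ > 0, and set K_j M := λ_j tr(M) I₂ + μ_j (M + Mᵀ) + 2μ₁ cof(M) for j = 1, 2. Then for every 2×2 real matrix M the following exact sum-of-squares decompositions hold: K₁M·M = (λ₁+2μ₁)(M₁₁+M₂₂)² + μ₁(M₂₁−M₁₂)², and K₂M·M = (λ₂+2μ₂)[(M₁₁−M₂₂)² + (M₁₂+M₂₁)²] + μ₁(M₂₁−M₁₂)². In particular K₁M·M = 0 iff tr M = 0 and M₂₁ = M₁₂ (divergence-free and curl-free), while K₂M·M = 0 iff M is a scalar multiple of the identity. -/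
open Matrix

set_option maxHeartbeats 1000000 in
lemma frob_expand (l m m1 : ℝ) (M : Matrix (Fin 2) (Fin 2) ℝ) :
    frob (Kmap l m m1 M) M
      = l * (M 0 0 + M 1 1)^2 + 2*m*(M 0 0^2 + M 1 1^2) + m*(M 0 1 + M 1 0)^2
        + 4*m1*(M 0 0 * M 1 1 - M 0 1 * M 1 0) := by
  simp [frob, Kmap, cof, Matrix.trace_fin_two, Matrix.mul_apply, Fin.sum_univ_two,
    Matrix.one_apply, Matrix.transpose_apply, Matrix.vecHead, Matrix.vecTail,
    Matrix.cons_val_zero, Matrix.cons_val_one, Matrix.head_cons]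
  ring

set_option maxHeartbeats 1000000 in
theorem stmt16 (l1 m1 l2 m2 : ℝ)
    (hpos : 0 < m1) (heq : -l2 - m2 = m1) (hlt : m1 < m2) (hvse : 0 < l1 + m1) :
    ∀ M : Matrix (Fin 2) (Fin 2) ℝ,
      (frob (Kmap l1 m1 m1 M) M
        = (l1 + 2 * m1) * (M 0 0 + M 1 1) ^ 2 + m1 * (M 1 0 - M 0 1) ^ 2) ∧
      (frob (Kmap l2 m2 m1 M) M
        = (l2 + 2 * m2) * ((M 0 0 - M 1 1) ^ 2 + (M 0 1 + M 1 0) ^ 2)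
          + m1 * (M 1 0 - M 0 1) ^ 2) ∧
      (frob (Kmap l1 m1 m1 M) M = 0 ↔ M.trace = 0 ∧ M 1 0 = M 0 1) ∧
      (frob (Kmap l2 m2 m1 M) M = 0 ↔
        ∃ γ : ℝ, M = γ • (1 : Matrix (Fin 2) (Fin 2) ℝ)) := by
  intro M
  have e1 : frob (Kmap l1 m1 m1 M) M
      = (l1 + 2 * m1) * (M 0 0 + M 1 1) ^ 2 + m1 * (M 1 0 - M 0 1) ^ 2 := by
    rw [frob_expand]; ring
  have e2 : frob (Kmap l2 m2 m1 M) M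
      = (l2 + 2 * m2) * ((M 0 0 - M 1 1) ^ 2 + (M 0 1 + M 1 0) ^ 2)
          + m1 * (M 1 0 - M 0 1) ^ 2 := by
    rw [frob_expand]; linear_combination
      ((M 0 1 + M 1 0) ^ 2 - 4 * (M 0 0 * M 1 1)) * heq
  have htr : M.trace = M 0 0 + M 1 1 := Matrix.trace_fin_two M
  have h12 : 0 < l1 + 2 * m1 := by linarith
  have h22 : 0 < l2 + 2 * m2 := by linarith
  refine ⟨e1, e2, ?_, ?_⟩
  · rw [e1, htr]
    constructor
    · intro h
      have h1 : (M 0 0 + M 1 1) ^ 2 = 0 := by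
        nlinarith [sq_nonneg (M 0 0 + M 1 1), sq_nonneg (M 1 0 - M 0 1)]
      have h2 : (M 1 0 - M 0 1) ^ 2 = 0 := by
        nlinarith [sq_nonneg (M 0 0 + M 1 1), sq_nonneg (M 1 0 - M 0 1)]
      constructor
      · exact pow_eq_zero_iff (n := 2) (by norm_num) |>.mp h1
      · have := pow_eq_zero_iff (n := 2) (by norm_num) |>.mp h2; linarith
    · rintro ⟨h1, h2⟩; rw [h1, h2]; ring
  · rw [e2]
    constructor
    · intro h
      have h1 : (M 0 0 - M 1 1) ^ 2 = 0 := by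
        nlinarith [sq_nonneg (M 0 0 - M 1 1), sq_nonneg (M 0 1 + M 1 0), sq_nonneg (M 1 0 - M 0 1)]
      have h2 : (M 0 1 + M 1 0) ^ 2 = 0 := by
        nlinarith [sq_nonneg (M 0 0 - M 1 1), sq_nonneg (M 0 1 + M 1 0), sq_nonneg (M 1 0 - M 0 1)]
      have h3 : (M 1 0 - M 0 1) ^ 2 = 0 := by
        nlinarith [sq_nonneg (M 0 0 - M 1 1), sq_nonneg (M 0 1 + M 1 0), sq_nonneg (M 1 0 - M 0 1)]
      have h1' := pow_eq_zero_iff (n := 2) (by norm_num) |>.mp h1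
      have h2' := pow_eq_zero_iff (n := 2) (by norm_num) |>.mp h2
      have h3' := pow_eq_zero_iff (n := 2) (by norm_num) |>.mp h3
      refine ⟨M 0 0, ?_⟩
      ext i j
      fin_cases i <;> fin_cases j <;>
        simp [Matrix.one_apply, Matrix.smul_apply] <;> linarith
    · rintro ⟨γ, rfl⟩
      simp [Matrix.one_apply, Matrix.smul_apply]
end
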